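/- For every M > 0 and every s ∈ (0,1] there exists a constant c > 0, depending only on M and s, such that for every l ∈ ℕ, every measurable V : ℝ → ℝ, every E ∈ ℝ with |V(x) − E| ≤ M for almost every x ∈ Λ_l := [−l/2, l/2], and every twice continuously differentiable ψ : ℝ → ℂ satisfying −ψ'' + Vψ = Eψ on Λ_l, one has ∫_S |ψ(x)|² dx ≥ c ∫_{Λ_l} |ψ(x)|² dx, where S := ⋃_{k ∈ ℤ ∩ Λ_l} [k − s/2, k + s/2]. -/

import Mathlib

/-!
On a window of length `s/2` inside `Λ_s(k) ∩ Λ_l` let `x₀` maximise `‖ψ‖`. Since `‖ψ''‖ ≤ M ‖ψ‖`,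
an interpolation inequality bounds `ψ'` on the window by a multiple of `‖ψ x₀‖`, so `‖ψ‖ ≥ ‖ψ x₀‖/2`
on a subinterval of length depending only on `M` and `s`; hence the mass of `ψ` on `Λ_s(k)` controls
`(‖ψ x₀‖ + ‖ψ' x₀‖)²`. Grönwall's inequality for the Cauchy data `(ψ, ψ')` carries this bound over
the unit interval `Λ_1(k)`. Summing over `k ∈ ℤ ∩ Λ_l`, the intervals `Λ_1(k)` cover `Λ_l` while the
intervals `Λ_s(k)` overlap only in endpoints.
-/

open MeasureTheory Set Real

theorem exists_Icc_add_subset_Icc_of_mem {a b x δ : ℝ} (hx : x ∈ Icc a b) (hδ : 0 ≤ δ)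
    (hδab : δ ≤ b - a) : ∃ c ∈ Icc (x - δ) x, Icc c (c + δ) ⊆ Icc a b :=
  ⟨max (x - δ) a, ⟨le_max_left _ _, max_le (by linarith) hx.1⟩,
    Icc_subset_Icc (le_max_right _ _) <| by
      rw [← max_add_add_right]; exact max_le (by linarith [hx.2]) (by linarith)⟩

section Gronwall

variable {F : Type*} [NormedAddCommGroup F] [NormedSpace ℝ F] {u : ℝ → F} {K x y : ℝ}

theorem norm_le_exp_mul_norm_of_le (hu : Differentiable ℝ u)
    (hK : ∀ t ∈ Icc y x, ‖deriv u t‖ ≤ K * ‖u t‖) (hyx : y ≤ x) :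
    ‖u x‖ ≤ exp (K * (x - y)) * ‖u y‖ := by
  have := norm_le_gronwallBound_of_norm_deriv_right_le (ε := 0) hu.continuous.continuousOn
    (fun t _ => (hu t).hasDerivAt.hasDerivWithinAt) le_rfl
    (fun t ht => by simpa using hK t (Ico_subset_Icc_self ht)) x ⟨hyx, le_rfl⟩
  rwa [gronwallBound_ε0, mul_comm] at this

theorem norm_le_exp_mul_norm_of_ge (hu : Differentiable ℝ u)
    (hK : ∀ t ∈ Icc y x, ‖deriv u t‖ ≤ K * ‖u t‖) (hyx : y ≤ x) :
    ‖u y‖ ≤ exp (K * (x - y)) * ‖u x‖ := by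
  have hv : Differentiable ℝ (fun t => u (-t)) := hu.comp differentiable_neg
  have := norm_le_exp_mul_norm_of_le hv (x := -y) (y := -x) (K := K)
    (fun t ht => by
      rw [deriv_comp_neg, norm_neg]
      exact hK (-t) ⟨by linarith [ht.2], by linarith [ht.1]⟩)
    (neg_le_neg hyx)
  simpa only [neg_neg, neg_sub_neg] using this

theorem norm_le_exp_mul_abs_sub_mul_norm {a b : ℝ} (hu : Differentiable ℝ u)
    (hK : ∀ t ∈ Icc a b, ‖deriv u t‖ ≤ K * ‖u t‖) (hx : x ∈ Icc a b) (hy : y ∈ Icc a b) :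
    ‖u x‖ ≤ exp (K * |x - y|) * ‖u y‖ := by
  rcases le_total y x with hyx | hxy
  · rw [abs_of_nonneg (sub_nonneg.2 hyx)]
    exact norm_le_exp_mul_norm_of_le hu (fun t ht => hK t ⟨hy.1.trans ht.1, ht.2.trans hx.2⟩) hyx
  · rw [abs_of_nonpos (sub_nonpos.2 hxy), neg_sub]
    exact norm_le_exp_mul_norm_of_ge hu (fun t ht => hK t ⟨hx.1.trans ht.1, ht.2.trans hy.2⟩) hxy

end Gronwall

section SecondOrder

variable {F : Type*} [NormedAddCommGroup F] [NormedSpace ℝ F] {ψ : ℝ → F}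

theorem norm_deriv_le_of_norm_le_of_norm_deriv_deriv_le {a b P Q : ℝ}
    (hψ : Differentiable ℝ ψ) (hψ' : Differentiable ℝ (deriv ψ)) (hab : a < b)
    (hP : ∀ t ∈ Icc a b, ‖ψ t‖ ≤ P) (hQ : ∀ t ∈ Icc a b, ‖deriv (deriv ψ) t‖ ≤ Q)
    {x : ℝ} (hx : x ∈ Icc a b) :
    ‖deriv ψ x‖ ≤ 2 * P / (b - a) + (b - a) * Q := by
  have hlen : ∀ t ∈ Icc a b, ‖t - x‖ ≤ b - a := fun t ht => by
    rw [Real.norm_eq_abs, abs_le]; constructor <;> linarith [ht.1, ht.2, hx.1, hx.2]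
  -- `(ψ b - ψ a) - (b - a) • ψ' x` is the increment of `g`, whose derivative is `O((b - a) Q)`.
  set g : ℝ → F := fun t => ψ t - t • deriv ψ x
  have hg : ∀ t, HasDerivAt g (deriv ψ t - deriv ψ x) t := fun t => by
    simpa using (hψ t).hasDerivAt.fun_sub ((hasDerivAt_id t).smul_const (deriv ψ x))
  have hg' : ∀ t ∈ Icc a b, ‖deriv g t‖ ≤ (b - a) * Q := fun t ht => by
    rw [(hg t).deriv]
    calc ‖deriv ψ t - deriv ψ x‖ ≤ Q * ‖t - x‖ :=
          (convex_Icc a b).norm_image_sub_le_of_norm_deriv_le (fun y _ => hψ' y) hQ hx ht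
      _ ≤ Q * (b - a) := mul_le_mul_of_nonneg_left (hlen t ht) ((norm_nonneg _).trans (hQ x hx))
      _ = (b - a) * Q := mul_comm _ _
  have hgab := (convex_Icc a b).norm_image_sub_le_of_norm_deriv_le
    (fun t _ => (hg t).differentiableAt) hg' (left_mem_Icc.2 hab.le) (right_mem_Icc.2 hab.le)
  have hgab' : g b - g a = (ψ b - ψ a) - (b - a) • deriv ψ x := by
    simp only [g, sub_smul]; abel
  have hba : 0 < b - a := sub_pos.2 hab
  have key : (b - a) * ‖deriv ψ x‖ ≤ 2 * P + (b - a) * Q * (b - a) := by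
    calc (b - a) * ‖deriv ψ x‖ = ‖(ψ b - ψ a) - (g b - g a)‖ := by
          rw [hgab', sub_sub_cancel, norm_smul, Real.norm_of_nonneg hba.le]
      _ ≤ ‖ψ b‖ + ‖ψ a‖ + ‖g b - g a‖ := (norm_sub_le _ _).trans
          (add_le_add_left (norm_sub_le _ _) _)
      _ ≤ 2 * P + (b - a) * Q * (b - a) := by
          have := hP b (right_mem_Icc.2 hab.le)
          have := hP a (left_mem_Icc.2 hab.le)
          rw [Real.norm_of_nonneg hba.le] at hgab
          linarith
  rw [div_add' _ _ _ hba.ne', le_div_iff₀ hba]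
  linarith

theorem norm_le_exp_mul_norm_add_norm_deriv {a b M x y : ℝ} (hM : 0 ≤ M) (hψ : ContDiff ℝ 2 ψ)
    (hψ'' : ∀ t ∈ Icc a b, ‖deriv (deriv ψ) t‖ ≤ M * ‖ψ t‖) (hx : x ∈ Icc a b) (hy : y ∈ Icc a b) :
    ‖ψ x‖ ≤ exp ((M + 1) * |x - y|) * (‖ψ y‖ + ‖deriv ψ y‖) := by
  have hd : Differentiable ℝ ψ := hψ.differentiable two_ne_zero
  have hd' : Differentiable ℝ (deriv ψ) :=
    (contDiff_succ_iff_deriv.1 hψ).2.2.differentiable one_ne_zero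
  -- Grönwall for the Cauchy data `u = (ψ, ψ')`, which solves a first-order system.
  set u : ℝ → F × F := fun t => (ψ t, deriv ψ t)
  have hu : ∀ t, HasDerivAt u (deriv ψ t, deriv (deriv ψ) t) t := fun t =>
    (hd t).hasDerivAt.prodMk (hd' t).hasDerivAt
  have hK : ∀ t ∈ Icc a b, ‖deriv u t‖ ≤ (M + 1) * ‖u t‖ := fun t ht => by
    have h1 : ‖ψ t‖ ≤ ‖u t‖ := norm_fst_le (u t)
    have h2 : ‖deriv ψ t‖ ≤ ‖u t‖ := norm_snd_le (u t)
    rw [(hu t).deriv, norm_prod_le_iff]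
    constructor
    · nlinarith [norm_nonneg (u t)]
    · nlinarith [hψ'' t ht, norm_nonneg (u t)]
  calc ‖ψ x‖ ≤ ‖u x‖ := norm_fst_le (u x)
    _ ≤ exp ((M + 1) * |x - y|) * ‖u y‖ :=
        norm_le_exp_mul_abs_sub_mul_norm (fun t => (hu t).differentiableAt) hK hx hy
    _ ≤ exp ((M + 1) * |x - y|) * (‖ψ y‖ + ‖deriv ψ y‖) := by
        gcongr
        exact (Prod.norm_def _).trans_le (max_le_add_of_nonneg (norm_nonneg _) (norm_nonneg _))

theorem mul_sq_le_setIntegral_norm_sq {a b L δ x₀ : ℝ} (hψ : Differentiable ℝ ψ)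
    (hL : ∀ t ∈ Icc a b, ‖deriv ψ t‖ ≤ L) (hx₀ : x₀ ∈ Icc a b) (hδ : 0 ≤ δ) (hδab : δ ≤ b - a)
    (hδL : δ * L ≤ ‖ψ x₀‖ / 2) :
    δ * (‖ψ x₀‖ / 2) ^ 2 ≤ ∫ x in Icc a b, ‖ψ x‖ ^ 2 := by
  obtain ⟨c, hc, hsub⟩ := exists_Icc_add_subset_Icc_of_mem hx₀ hδ hδab
  have hL0 : 0 ≤ L := (norm_nonneg _).trans (hL x₀ hx₀)
  have hlow : ∀ x ∈ Icc c (c + δ), (‖ψ x₀‖ / 2) ^ 2 ≤ ‖ψ x‖ ^ 2 := fun x hx => by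
    have hdist : ‖x - x₀‖ ≤ δ := by
      rw [Real.norm_eq_abs, abs_le]; constructor <;> linarith [hx.1, hx.2, hc.1, hc.2]
    have hclose : ‖ψ x - ψ x₀‖ ≤ L * δ :=
      ((convex_Icc a b).norm_image_sub_le_of_norm_deriv_le (fun y _ => hψ y) hL hx₀ (hsub hx)).trans
        (mul_le_mul_of_nonneg_left hdist hL0)
    have := norm_sub_norm_le (ψ x₀) (ψ x)
    rw [norm_sub_rev] at this
    gcongr
    linarith
  have hint : IntegrableOn (fun x => ‖ψ x‖ ^ 2) (Icc a b) :=
    (hψ.continuous.norm.pow 2).integrableOn_Icc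
  calc δ * (‖ψ x₀‖ / 2) ^ 2 = (‖ψ x₀‖ / 2) ^ 2 * volume.real (Icc c (c + δ)) := by
        rw [Real.volume_real_Icc, add_sub_cancel_left, max_eq_left hδ, mul_comm]
    _ ≤ ∫ x in Icc c (c + δ), ‖ψ x‖ ^ 2 :=
        setIntegral_ge_of_const_le_real measurableSet_Icc measure_Icc_lt_top.ne hlow
          (hint.mono_set hsub)
    _ ≤ ∫ x in Icc a b, ‖ψ x‖ ^ 2 :=
        setIntegral_mono_set hint (ae_of_all _ fun x => by positivity) hsub.eventuallyLE

theorem exists_sq_norm_add_norm_deriv_le_setIntegral {M r : ℝ} (hM : 0 ≤ M) (hr : 0 < r) :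
    ∃ C > 0, ∀ (ψ : ℝ → F) (a : ℝ), ContDiff ℝ 2 ψ →
      (∀ t ∈ Icc a (a + r), ‖deriv (deriv ψ) t‖ ≤ M * ‖ψ t‖) →
      ∃ x₀ ∈ Icc a (a + r), (‖ψ x₀‖ + ‖deriv ψ x₀‖) ^ 2 ≤ C * ∫ x in Icc a (a + r), ‖ψ x‖ ^ 2 := by
  set D := 2 / r + r * M
  have hD : 0 < D := by positivity
  set δ := min r (1 / (2 * D))
  have hδ : 0 < δ := lt_min hr (by positivity)
  refine ⟨4 * (1 + D) ^ 2 / δ, by positivity, fun ψ a hψ hψ'' => ?_⟩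
  have hd : Differentiable ℝ ψ := hψ.differentiable two_ne_zero
  have hd' : Differentiable ℝ (deriv ψ) :=
    (contDiff_succ_iff_deriv.1 hψ).2.2.differentiable one_ne_zero
  have har : a < a + r := lt_add_of_pos_right a hr
  obtain ⟨x₀, hx₀, hmax⟩ := isCompact_Icc.exists_isMaxOn (nonempty_Icc.2 har.le)
    hψ.continuous.norm.continuousOn
  set P := ‖ψ x₀‖
  have hderiv : ∀ t ∈ Icc a (a + r), ‖deriv ψ t‖ ≤ D * P := fun t ht => by
    have := norm_deriv_le_of_norm_le_of_norm_deriv_deriv_le hd hd' har (fun t ht => hmax ht)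
      (fun t ht => (hψ'' t ht).trans (mul_le_mul_of_nonneg_left (hmax ht) hM)) ht
    rw [add_sub_cancel_left] at this
    calc ‖deriv ψ t‖ ≤ 2 * P / r + r * (M * P) := this
      _ = D * P := by ring
  have hδD : δ * (D * P) ≤ P / 2 := by
    have : δ * D ≤ 1 / 2 := by
      calc δ * D ≤ 1 / (2 * D) * D := by gcongr; exact min_le_right _ _
        _ = 1 / 2 := by field_simp
    nlinarith [norm_nonneg (ψ x₀)]
  have hmass := mul_sq_le_setIntegral_norm_sq hd hderiv hx₀ hδ.le
    (by rw [add_sub_cancel_left]; exact min_le_left _ _) hδD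
  refine ⟨x₀, hx₀, ?_⟩
  calc (P + ‖deriv ψ x₀‖) ^ 2 ≤ ((1 + D) * P) ^ 2 := by
        gcongr; linarith [hderiv x₀ hx₀]
    _ = 4 * (1 + D) ^ 2 / δ * (δ * (P / 2) ^ 2) := by field_simp; ring
    _ ≤ 4 * (1 + D) ^ 2 / δ * ∫ x in Icc a (a + r), ‖ψ x‖ ^ 2 := by gcongr

theorem exists_setIntegral_inter_Icc_le_setIntegral {M r ρ : ℝ} (hM : 0 ≤ M) (hr : 0 < r)
    (hρ : 0 ≤ ρ) :
    ∃ C > 0, ∀ (ψ : ℝ → F) (α β a : ℝ), ContDiff ℝ 2 ψ →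
      (∀ t ∈ Icc α β, ‖deriv (deriv ψ) t‖ ≤ M * ‖ψ t‖) → Icc a (a + r) ⊆ Icc α β →
      ∫ x in Icc α β ∩ Icc (a - ρ) (a + r + ρ), ‖ψ x‖ ^ 2
        ≤ C * ∫ x in Icc a (a + r), ‖ψ x‖ ^ 2 := by
  obtain ⟨C₀, hC₀, hdata⟩ := exists_sq_norm_add_norm_deriv_le_setIntegral (F := F) hM hr
  set w := r + 2 * ρ
  have hw : 0 < w := by positivity
  refine ⟨w * exp ((M + 1) * w) ^ 2 * C₀, by positivity, fun ψ α β a hψ hψ'' hsub => ?_⟩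
  obtain ⟨x₀, hx₀, hx₀C⟩ := hdata ψ a hψ fun t ht => hψ'' t (hsub ht)
  set J := Icc α β ∩ Icc (a - ρ) (a + r + ρ)
  set B := (exp ((M + 1) * w) * (‖ψ x₀‖ + ‖deriv ψ x₀‖)) ^ 2 with hB
  have hbound : ∀ x ∈ J, ‖ψ x‖ ^ 2 ≤ B := fun x hx => by
    have hdist : |x - x₀| ≤ w := by
      rw [abs_le]; constructor <;> linarith [hx.2.1, hx.2.2, hx₀.1, hx₀.2]
    refine pow_le_pow_left₀ (norm_nonneg _) ?_ 2
    refine (norm_le_exp_mul_norm_add_norm_deriv hM hψ hψ'' hx.1 (hsub hx₀)).trans ?_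
    gcongr
  have hJ : volume.real J ≤ w := by
    calc volume.real J ≤ volume.real (Icc (a - ρ) (a + r + ρ)) :=
          measureReal_mono inter_subset_right measure_Icc_lt_top.ne
      _ = w := by rw [Real.volume_real_Icc, max_eq_left (by linarith)]; ring
  calc ∫ x in J, ‖ψ x‖ ^ 2 ≤ ∫ x in J, B :=
        setIntegral_mono_on ((hψ.continuous.norm.pow 2).integrableOn_Icc.mono_set inter_subset_left)
          (integrableOn_const ((measure_mono inter_subset_left).trans_lt measure_Icc_lt_top).ne)
          (measurableSet_Icc.inter measurableSet_Icc) hbound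
    _ = volume.real J * B := by rw [setIntegral_const, smul_eq_mul]
    _ ≤ w * B := by gcongr
    _ ≤ w * exp ((M + 1) * w) ^ 2 * C₀ * ∫ x in Icc a (a + r), ‖ψ x‖ ^ 2 := by
        rw [hB, mul_pow, mul_assoc, mul_assoc]
        gcongr

theorem exists_setIntegral_Icc_inter_le_setIntegral_Icc {M r ρ : ℝ} (hM : 0 ≤ M) (hr : 0 < r)
    (hρ : 0 ≤ ρ) :
    ∃ C > 0, ∀ (ψ : ℝ → F) (α β k : ℝ), ContDiff ℝ 2 ψ →
      (∀ t ∈ Icc α β, ‖deriv (deriv ψ) t‖ ≤ M * ‖ψ t‖) → k ∈ Icc α β → r ≤ β - α →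
      ∫ x in Icc (k - ρ) (k + ρ) ∩ Icc α β, ‖ψ x‖ ^ 2
        ≤ C * ∫ x in Icc (k - r) (k + r), ‖ψ x‖ ^ 2 := by
  obtain ⟨C, hC, hloc⟩ := exists_setIntegral_inter_Icc_le_setIntegral (F := F) hM hr hρ
  refine ⟨C, hC, fun ψ α β k hψ hψ'' hk hrαβ => ?_⟩
  obtain ⟨a, ha, hsub⟩ := exists_Icc_add_subset_Icc_of_mem hk hr.le hrαβ
  have hint : ∀ {s : Set ℝ}, IsCompact s → IntegrableOn (fun x => ‖ψ x‖ ^ 2) s := fun hs =>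
    (hψ.continuous.norm.pow 2).continuousOn.integrableOn_compact hs
  calc ∫ x in Icc (k - ρ) (k + ρ) ∩ Icc α β, ‖ψ x‖ ^ 2
      ≤ ∫ x in Icc α β ∩ Icc (a - ρ) (a + r + ρ), ‖ψ x‖ ^ 2 := by
        rw [inter_comm]
        refine setIntegral_mono_set (hint (isCompact_Icc.inter_right isClosed_Icc))
          (ae_of_all _ fun x => by positivity) (inter_subset_inter_right _ ?_).eventuallyLE
        exact Icc_subset_Icc (by linarith [ha.2]) (by linarith [ha.1])
    _ ≤ C * ∫ x in Icc a (a + r), ‖ψ x‖ ^ 2 := hloc ψ α β a hψ hψ'' hsub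
    _ ≤ C * ∫ x in Icc (k - r) (k + r), ‖ψ x‖ ^ 2 := by
        refine mul_le_mul_of_nonneg_left (setIntegral_mono_set (hint isCompact_Icc)
          (ae_of_all _ fun x => by positivity) (Icc_subset_Icc ?_ ?_).eventuallyLE) hC.le
        · linarith [ha.1]
        · linarith [ha.2]

end SecondOrder

theorem setIntegral_le_sum_setIntegral_of_subset_biUnion {X ι : Type*} [MeasurableSpace X]
    {μ : Measure X} {f : X → ℝ} {s : Set X} {u : ι → Set X} (t : Finset ι) (hf : 0 ≤ f)
    (hs : MeasurableSet s) (hu : ∀ i ∈ t, MeasurableSet (u i)) (hfs : IntegrableOn f s μ)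
    (hcover : s ⊆ ⋃ i ∈ t, u i) :
    ∫ x in s, f x ∂μ ≤ ∑ i ∈ t, ∫ x in u i ∩ s, f x ∂μ := by
  have hint : ∀ i ∈ t, Integrable ((u i ∩ s).indicator f) μ := fun i hi =>
    (hfs.mono_set inter_subset_right).integrable_indicator ((hu i hi).inter hs)
  have hpt : ∀ x, s.indicator f x ≤ ∑ i ∈ t, (u i ∩ s).indicator f x := fun x => by
    by_cases hx : x ∈ s
    · obtain ⟨i, hi, hxi⟩ := mem_iUnion₂.1 (hcover hx)
      calc s.indicator f x = (u i ∩ s).indicator f x := by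
            rw [indicator_of_mem hx, indicator_of_mem (mem_inter hxi hx)]
        _ ≤ _ := Finset.single_le_sum (f := fun j => (u j ∩ s).indicator f x)
            (fun j _ => indicator_nonneg (fun y _ => hf y) x) hi
    · rw [indicator_of_notMem hx]
      exact Finset.sum_nonneg fun j _ => indicator_nonneg (fun y _ => hf y) x
  calc ∫ x in s, f x ∂μ = ∫ x, s.indicator f x ∂μ := (integral_indicator hs).symm
    _ ≤ ∫ x, ∑ i ∈ t, (u i ∩ s).indicator f x ∂μ :=
        integral_mono (hfs.integrable_indicator hs) (integrable_finsetSum t hint) hpt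
    _ = ∑ i ∈ t, ∫ x in u i ∩ s, f x ∂μ := by
        rw [integral_finsetSum t hint]
        exact Finset.sum_congr rfl fun i hi => integral_indicator ((hu i hi).inter hs)

theorem sum_setIntegral_Icc_le_setIntegral_biUnion {f : ℝ → ℝ} {s : ℝ} (t : Finset ℤ)
    (hs : s ≤ 1) (hf : 0 ≤ f) (hfi : LocallyIntegrable f) :
    ∑ k ∈ t, ∫ x in Icc ((k : ℝ) - s / 2) (k + s / 2), f x
      ≤ ∫ x in ⋃ k ∈ t, Icc ((k : ℝ) - s / 2) (k + s / 2), f x := by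
  have hdisj : (t : Set ℤ).PairwiseDisjoint fun k : ℤ => Ioo ((k : ℝ) - s / 2) (k + s / 2) :=
    fun k _ k' _ hkk' => disjoint_left.2 fun x ⟨hx₁, hx₂⟩ ⟨hx₁', hx₂'⟩ => hkk' <| by
      have h1 : ((k - k' : ℤ) : ℝ) < 1 := by push_cast; linarith
      have h2 : (-1 : ℝ) < ((k - k' : ℤ) : ℝ) := by push_cast; linarith
      have : k - k' < 1 := by exact_mod_cast h1
      have : -1 < k - k' := by exact_mod_cast h2
      omega
  have hcompact : IsCompact (⋃ k ∈ t, Icc ((k : ℝ) - s / 2) (k + s / 2)) :=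
    t.isCompact_biUnion fun _ _ => isCompact_Icc
  calc ∑ k ∈ t, ∫ x in Icc ((k : ℝ) - s / 2) (k + s / 2), f x
      = ∫ x in ⋃ k ∈ t, Ioo ((k : ℝ) - s / 2) (k + s / 2), f x := by
        rw [integral_biUnion_finset t (fun _ _ => measurableSet_Ioo) hdisj
          fun _ _ => hfi.integrableOn_isCompact isCompact_Icc |>.mono_set Ioo_subset_Icc_self]
        exact Finset.sum_congr rfl fun _ _ => integral_Icc_eq_integral_Ioo
    _ ≤ ∫ x in ⋃ k ∈ t, Icc ((k : ℝ) - s / 2) (k + s / 2), f x :=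
        setIntegral_mono_set (hfi.integrableOn_isCompact hcompact) (ae_of_all _ hf)
          (biUnion_mono subset_rfl fun _ _ => Ioo_subset_Icc_self).eventuallyLE

theorem exists_int_mem_Icc_sub_half_add_half {l : ℕ} {x : ℝ} (hx : x ∈ Icc (-(l : ℝ) / 2) (l / 2)) :
    ∃ k : ℤ, (k : ℝ) ∈ Icc (-(l : ℝ) / 2) (l / 2) ∧ x ∈ Icc ((k : ℝ) - 1 / 2) (k + 1 / 2) := by
  -- Round towards the origin, so that `k` cannot leave `[-l/2, l/2]` when `l` is odd.
  rcases le_total 0 x with h0 | h0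
  · set k := ⌈x - 1 / 2⌉
    have hk₁ : x - 1 / 2 ≤ k := Int.le_ceil _
    have hk₂ : (k : ℝ) < x + 1 / 2 := by linarith [Int.ceil_lt_add_one (x - 1 / 2)]
    have hk0 : (0 : ℝ) ≤ k := by
      have : (-1 : ℝ) < k := by linarith
      exact_mod_cast (by exact_mod_cast this : (-1 : ℤ) < k)
    have hkl : (2 * k : ℝ) ≤ l := by
      have : 2 * k < (l : ℤ) + 1 := by exact_mod_cast (by linarith [hx.2] : (2 * k : ℝ) < l + 1)
      exact_mod_cast (by omega : 2 * k ≤ (l : ℤ))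
    exact ⟨k, ⟨by linarith [hx.1], by linarith⟩, by linarith, by linarith⟩
  · set k := ⌊x + 1 / 2⌋
    have hk₁ : (k : ℝ) ≤ x + 1 / 2 := Int.floor_le _
    have hk₂ : x - 1 / 2 < k := by linarith [Int.lt_floor_add_one (x + 1 / 2)]
    have hk0 : (k : ℝ) ≤ 0 := by
      have : (k : ℝ) < 1 := by linarith
      exact_mod_cast Int.lt_add_one_iff.1 (by exact_mod_cast this : k < 0 + 1)
    have hkl : -(l : ℝ) ≤ 2 * k := by
      have : -(l : ℤ) - 1 < 2 * k := by exact_mod_cast (by linarith [hx.1] : -(l : ℝ) - 1 < 2 * k)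
      exact_mod_cast (by omega : -(l : ℤ) ≤ 2 * k)
    exact ⟨k, ⟨by linarith, by linarith [hx.2]⟩, by linarith, by linarith⟩

theorem norm_deriv_deriv_le_of_schrodinger {ψ : ℝ → ℂ} {V : ℝ → ℝ} {E M a b : ℝ} (hab : a < b)
    (hψ : ContDiff ℝ 2 ψ) (hV : ∀ᵐ x ∂volume.restrict (Icc a b), |V x - E| ≤ M)
    (heq : ∀ x ∈ Icc a b, -(deriv (deriv ψ) x) + (V x : ℂ) * ψ x = (E : ℂ) * ψ x) :
    ∀ x ∈ Icc a b, ‖deriv (deriv ψ) x‖ ≤ M * ‖ψ x‖ := by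
  have hψ'' : Continuous (deriv (deriv ψ)) :=
    (contDiff_succ_iff_deriv.1 hψ).2.2.continuous_deriv le_rfl
  -- The a.e. identity `min ‖ψ''‖ (M ‖ψ‖) = ‖ψ''‖` of continuous functions holds on all of `[a, b]`.
  have hmin := Measure.eqOn_Icc_of_ae_eq volume hab.ne
    (f := fun x => min ‖deriv (deriv ψ) x‖ (M * ‖ψ x‖)) (g := fun x => ‖deriv (deriv ψ) x‖) ?_
    (hψ''.norm.min (continuous_const.mul hψ.continuous.norm)).continuousOn
    hψ''.norm.continuousOn
  · exact fun x hx => min_eq_left_iff.1 (hmin hx)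
  filter_upwards [hV, ae_restrict_mem measurableSet_Icc] with x hVx hx
  refine min_eq_left ?_
  have : deriv (deriv ψ) x = ((V x - E : ℝ) : ℂ) * ψ x := by
    push_cast; linear_combination -(heq x hx)
  rw [this, norm_mul, Complex.norm_real, Real.norm_eq_abs]
  exact mul_le_mul_of_nonneg_right hVx (norm_nonneg _)

/-- Global unique-continuation estimate: for every `M > 0` and `s ∈ (0,1]` there is `c > 0`
(depending only on `M` and `s`) such that for every `l ∈ ℕ`, every measurable `V`, every `E`
with `|V - E| ≤ M` a.e. on `Λ_l = [-l/2, l/2]`, and every `C²` eigenfunction `ψ` of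
`-ψ'' + Vψ = Eψ` on `Λ_l`, the `L²` mass of `ψ` on `S = ⋃_{k ∈ ℤ ∩ Λ_l} [k - s/2, k + s/2]`
dominates `c` times its mass on `Λ_l`. -/
theorem unique_continuation_global
    (M : ℝ) (hM : 0 < M) (s : ℝ) (hs : s ∈ Set.Ioc (0 : ℝ) 1) :
    ∃ c : ℝ, 0 < c ∧
      ∀ (l : ℕ) (V : ℝ → ℝ), Measurable V →
      ∀ (E : ℝ),
        (∀ᵐ x ∂(volume.restrict (Set.Icc (-(l : ℝ)/2) ((l : ℝ)/2))), |V x - E| ≤ M) →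
      ∀ (ψ : ℝ → ℂ), ContDiff ℝ 2 ψ →
      (∀ x ∈ Set.Icc (-(l : ℝ)/2) ((l : ℝ)/2),
        -(deriv (deriv ψ) x) + (V x : ℂ) * ψ x = (E : ℂ) * ψ x) →
      c * ∫ x in Set.Icc (-(l : ℝ)/2) ((l : ℝ)/2), ‖ψ x‖ ^ 2
        ≤ ∫ x in ⋃ k ∈ {k : ℤ | (k : ℝ) ∈ Set.Icc (-(l : ℝ)/2) ((l : ℝ)/2)},
            Set.Icc ((k : ℝ) - s/2) ((k : ℝ) + s/2), ‖ψ x‖ ^ 2 := by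
  obtain ⟨hs0, hs1⟩ := hs
  obtain ⟨C, hC, hloc⟩ := exists_setIntegral_Icc_inter_le_setIntegral_Icc (F := ℂ) hM.le
    (half_pos hs0) (ρ := 1 / 2) (by norm_num)
  refine ⟨C⁻¹, inv_pos.2 hC, fun l V _ E hV ψ hψ heq => ?_⟩
  rw [inv_mul_le_iff₀ hC]
  rcases Nat.eq_zero_or_pos l with rfl | hl
  · rw [setIntegral_measure_zero _ (by simp)]
    exact mul_nonneg hC.le (integral_nonneg fun x => by positivity)
  have hl1 : (1 : ℝ) ≤ l := by exact_mod_cast hl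
  have hψ'' := norm_deriv_deriv_le_of_schrodinger (by linarith) hψ hV heq
  set ks := Finset.Icc ⌈-(l : ℝ) / 2⌉ ⌊(l : ℝ) / 2⌋
  have hks : ∀ k : ℤ, k ∈ ks ↔ (k : ℝ) ∈ Icc (-(l : ℝ) / 2) (l / 2) := fun k => by
    rw [Finset.mem_Icc, Int.ceil_le, Int.le_floor, mem_Icc]
  have hS : ⋃ k ∈ {k : ℤ | (k : ℝ) ∈ Icc (-(l : ℝ) / 2) (l / 2)}, Icc ((k : ℝ) - s / 2) (k + s / 2)
      = ⋃ k ∈ ks, Icc ((k : ℝ) - s / 2) (k + s / 2) := by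
    simp only [mem_ofPred_eq, hks]
  have hψ2 : Continuous fun x => ‖ψ x‖ ^ 2 := hψ.continuous.norm.pow 2
  calc ∫ x in Icc (-(l : ℝ) / 2) (l / 2), ‖ψ x‖ ^ 2
      ≤ ∑ k ∈ ks, ∫ x in Icc ((k : ℝ) - 1 / 2) (k + 1 / 2) ∩ Icc (-(l : ℝ) / 2) (l / 2),
          ‖ψ x‖ ^ 2 :=
        setIntegral_le_sum_setIntegral_of_subset_biUnion ks (fun x => by positivity)
          measurableSet_Icc (fun _ _ => measurableSet_Icc) hψ2.integrableOn_Icc fun x hx => by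
            obtain ⟨k, hk, hxk⟩ := exists_int_mem_Icc_sub_half_add_half hx
            exact mem_iUnion₂.2 ⟨k, (hks k).2 hk, hxk⟩
    _ ≤ ∑ k ∈ ks, C * ∫ x in Icc ((k : ℝ) - s / 2) (k + s / 2), ‖ψ x‖ ^ 2 :=
        Finset.sum_le_sum fun k hk => hloc ψ _ _ k hψ hψ'' ((hks k).1 hk) (by linarith)
    _ ≤ C * ∫ x in ⋃ k ∈ {k : ℤ | (k : ℝ) ∈ Icc (-(l : ℝ) / 2) (l / 2)},
          Icc ((k : ℝ) - s / 2) (k + s / 2), ‖ψ x‖ ^ 2 := by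
        rw [← Finset.mul_sum, hS]
        exact mul_le_mul_of_nonneg_left (sum_setIntegral_Icc_le_setIntegral_biUnion ks hs1
          (fun x => by positivity) hψ2.locallyIntegrable) hC.le
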